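/- The sequential compound (-1) → ∗ → ∗ has game value ↓, i.e., (-1) → (∗ → ∗) = ↓ = {∗ | 0}. -/

import Mathlib

/-!
Since `-1` has no Left option and `0 → H = H`, the compound `(-1) → H` is `{H^L | H}`; likewise
`∗ → H = {H | H}`. Hence `(-1) → (∗ → ∗) = {∗ | {∗ | ∗}}`, and as `{∗ | ∗} ≈ 0`, replacing the
Right option gives `{∗ | 0} = ↓`.
-/

universe u

namespace SetTheory

/-- Pre-games, as in the older Mathlib's `SetTheory.PGame` (removed from Mathlib since). -/
inductive PGame : Type (u + 1)
  | mk : ∀ α β : Type u, (α → PGame) → (β → PGame) → PGame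

namespace PGame

/-- The type of left moves. -/
def LeftMoves : PGame → Type u
  | mk l _ _ _ => l

/-- The type of right moves. -/
def RightMoves : PGame → Type u
  | mk _ r _ _ => r

/-- The left options. -/
def moveLeft : ∀ g : PGame, LeftMoves g → PGame
  | mk _l _ L _ => L

/-- The right options. -/
def moveRight : ∀ g : PGame, RightMoves g → PGame
  | mk _ _r _ R => R

instance : Zero PGame := ⟨⟨PEmpty, PEmpty, PEmpty.elim, PEmpty.elim⟩⟩

/-- Negation: swap the roles of the players. -/
def neg : PGame → PGame
  | mk l r L R => mk r l (fun i => neg (R i)) fun i => neg (L i)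

instance : Neg PGame := ⟨neg⟩

/-- Auxiliary for addition: `x + y` by recursion on `y`, given `x`'s options plus anything. -/
def addAux {xl xr : Type u} (IHl : xl → PGame → PGame) (IHr : xr → PGame → PGame) :
    PGame → PGame
  | mk yl yr yL yR => mk (xl ⊕ yl) (xr ⊕ yr)
      (Sum.elim (fun i => IHl i (mk yl yr yL yR)) fun j => addAux IHl IHr (yL j))
      (Sum.elim (fun i => IHr i (mk yl yr yL yR)) fun j => addAux IHl IHr (yR j))

/-- Disjunctive sum of pregames. -/
def add : PGame → PGame → PGame
  | mk _ _ xL xR => addAux (fun i => add (xL i)) (fun i => add (xR i))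

instance : Add PGame := ⟨add⟩

instance : Sub PGame := ⟨fun x y => x + -y⟩

/-- The game `∗ = {0 | 0}`. -/
def star : PGame := ⟨PUnit, PUnit, fun _ => 0, fun _ => 0⟩

/-- Simultaneous definition of `≤` (first component) and `⧏` (second component). -/
noncomputable def leLF (x : PGame) : PGame → Prop × Prop :=
  PGame.rec (motive := fun _ => PGame → Prop × Prop)
    (fun xl xr xL xR IHxl IHxr y =>
      PGame.rec (motive := fun _ => Prop × Prop)
        (fun yl yr yL yR IHyl IHyr =>
          ((∀ i, (IHxl i (mk yl yr yL yR)).2) ∧ ∀ j, (IHyr j).2,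
           (∃ i, (IHyl i).1) ∨ ∃ j, (IHxr j (mk yl yr yL yR)).1)) y) x

/-- `x ≤ y`: Left wins `y - x` going second. -/
def le (x y : PGame) : Prop := (leLF x y).1

instance : LE PGame := ⟨le⟩

/-- Equivalence of pregames: `x ≤ y ∧ y ≤ x`. -/
def Equiv (x y : PGame) : Prop := x ≤ y ∧ y ≤ x

instance : HasEquiv PGame := ⟨Equiv⟩

end PGame

end SetTheory

open SetTheory

open scoped PGame

namespace SeqCompound

open Classical in
/-- The sequential compound `G → H` of two pregames. -/
noncomputable def seqc : PGame → PGame → PGame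
  | PGame.mk α β L R, H =>
    if Nonempty α then
      if Nonempty β then
        PGame.mk α β (fun a => seqc (L a) H) (fun b => seqc (R b) H)
      else
        PGame.mk α H.RightMoves (fun a => seqc (L a) H) H.moveRight
    else
      if Nonempty β then
        PGame.mk H.LeftMoves β H.moveLeft (fun b => seqc (R b) H)
      else H

/-- A pregame is dicotic (all-small) if in every subposition,
Left has an option iff Right has an option. -/
def Dicotic : PGame → Prop
  | PGame.mk α β L R =>
    (Nonempty α ↔ Nonempty β) ∧ (∀ a, Dicotic (L a)) ∧ (∀ b, Dicotic (R b))

/-- The canonical nonnegative integer game `{n-1 | }`. -/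
def intGame : ℕ → PGame
  | 0 => 0
  | n + 1 => PGame.mk PUnit PEmpty (fun _ => intGame n) PEmpty.elim

/-- `upSum k` is the disjunctive sum `↑¹ + ↑² + ⋯ + ↑ᵏ`. -/
def upSum : ℕ → PGame
  | 0 => 0
  | k + 1 => upSum k +
      PGame.mk PUnit PUnit (fun _ => 0) (fun _ => PGame.star - upSum k)

/-- `upPow k` is the game `↑^(k+1) = {0 | ∗ - (↑¹ + ⋯ + ↑ᵏ)}`. -/
def upPow (k : ℕ) : PGame :=
  PGame.mk PUnit PUnit (fun _ => 0) (fun _ => PGame.star - upSum k)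

/-- Sequential compound of a list of games. -/
noncomputable def seqList : List PGame → PGame
  | [] => 0
  | G :: l => seqc G (seqList l)

end SeqCompound

namespace SeqCompound

/-- The game `↓ = {∗ | 0}`. -/
def down : PGame := PGame.mk PUnit PUnit (fun _ => PGame.star) fun _ => 0

end SeqCompound

namespace SetTheory.PGame

def LF (x y : PGame) : Prop := (leLF x y).2

local infix:50 " ⧏ " => LF

theorem le_iff_forall_lf {x y : PGame} :
    x ≤ y ↔ (∀ i, x.moveLeft i ⧏ y) ∧ ∀ j, x ⧏ y.moveRight j := by
  cases x; cases y; rfl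

theorem lf_iff_exists_le {x y : PGame} :
    x ⧏ y ↔ (∃ i, x ≤ y.moveLeft i) ∨ ∃ j, x.moveRight j ≤ y := by
  cases x; cases y; rfl

theorem lf_of_le_moveLeft {x y : PGame} {i : y.LeftMoves} (h : x ≤ y.moveLeft i) : x ⧏ y :=
  lf_iff_exists_le.2 (Or.inl ⟨i, h⟩)

theorem lf_of_moveRight_le {x y : PGame} {j : x.RightMoves} (h : x.moveRight j ≤ y) : x ⧏ y :=
  lf_iff_exists_le.2 (Or.inr ⟨j, h⟩)

theorem le_refl (x : PGame) : x ≤ x := by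
  induction x with
  | mk xl xr xL xR ihL ihR =>
    exact le_iff_forall_lf.2
      ⟨fun i => lf_of_le_moveLeft (ihL i), fun j => lf_of_moveRight_le (ihR j)⟩

theorem mk_le_mk_of_right_le {l r : Type u} (L : l → PGame) {R R' : r → PGame}
    (h : ∀ j, R j ≤ R' j) : mk l r L R ≤ mk l r L R' :=
  le_iff_forall_lf.2
    ⟨fun _ => lf_of_le_moveLeft (le_refl _), fun j => lf_of_moveRight_le (h j)⟩

theorem mk_equiv_mk_of_right_equiv {l r : Type u} (L : l → PGame) {R R' : r → PGame}
    (h : ∀ j, R j ≈ R' j) : mk l r L R ≈ mk l r L R' :=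
  ⟨mk_le_mk_of_right_le L fun j => (h j).1, mk_le_mk_of_right_le L fun j => (h j).2⟩

theorem mk_star_star_equiv_zero : mk PUnit PUnit (fun _ => star) (fun _ => star) ≈ 0 :=
  ⟨le_iff_forall_lf.2 ⟨fun _ => lf_of_moveRight_le (j := PUnit.unit) (le_refl 0), fun j => j.elim⟩,
    le_iff_forall_lf.2 ⟨fun i => i.elim, fun _ => lf_of_le_moveLeft (i := PUnit.unit) (le_refl 0)⟩⟩

end SetTheory.PGame

namespace SeqCompound

open PGame

section

variable {α β : Type u} (L : α → PGame) (R : β → PGame) (H : PGame)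

theorem seqc_mk_of_isEmpty [IsEmpty α] [IsEmpty β] : seqc (mk α β L R) H = H := by
  rw [seqc, if_neg (not_nonempty_iff.2 ‹_›), if_neg (not_nonempty_iff.2 ‹_›)]

theorem seqc_mk_of_nonempty [Nonempty α] [Nonempty β] :
    seqc (mk α β L R) H = mk α β (fun a => seqc (L a) H) (fun b => seqc (R b) H) := by
  rw [seqc, if_pos ‹_›, if_pos ‹_›]

theorem seqc_mk_of_isEmpty_left [IsEmpty α] [Nonempty β] :
    seqc (mk α β L R) H = mk H.LeftMoves β H.moveLeft (fun b => seqc (R b) H) := by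
  rw [seqc, if_neg (not_nonempty_iff.2 ‹_›), if_pos ‹_›]

end

theorem seqc_zero (H : PGame) : seqc 0 H = H :=
  seqc_mk_of_isEmpty _ _ H

theorem seqc_star (H : PGame) : seqc star H = mk PUnit PUnit (fun _ => H) (fun _ => H) := by
  rw [PGame.star, seqc_mk_of_nonempty]
  simp only [seqc_zero]

theorem seqc_negOne (H : PGame) :
    seqc (-intGame 1) H = mk H.LeftMoves PUnit H.moveLeft (fun _ => H) := by
  show seqc (mk PEmpty PUnit _ fun _ => -0) H = _
  rw [seqc_mk_of_isEmpty_left]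
  exact congrArg _ (funext fun _ => seqc_mk_of_isEmpty _ _ H)

/-- `(-1) → (∗ → ∗) = ↓` as game values. -/
theorem negOne_seqc_star_star :
    seqc (-intGame 1) (seqc PGame.star PGame.star) ≈ down := by
  rw [seqc_negOne, seqc_star]
  exact mk_equiv_mk_of_right_equiv _ fun _ => mk_star_star_equiv_zero

end SeqCompound
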